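/- arXiv:1812.11448 — 2 statements merged into one kernel-verified Lean document; each statement's English description precedes it below -/
import Mathlib

section
/- Let G = (V,E) be a graph with maximum independent set K, and consider the loss L(S) = (α₁/2)|S| + (α₃/4)·2·e(V∖S) over subsets S ⊆ V of removed nodes, where e(W) denotes the number of edges with both endpoints in W. If α₃ > 2α₁·|V|, then S = V∖K minimizes L, i.e., keeping exactly the nodes of a maximum independent set is optimal. -/
/-- A set of vertices is independent if no two of its members are adjacent. -/
def IsIndepSet {V : Type*} (G : SimpleGraph V) (s : Set V) : Prop :=
  s.Pairwise fun a b => ¬ G.Adj a b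

/-- Number of ordered pairs `(i, j)` with `i, j ∈ W` and `i ∼ j`; this equals twice the
number of undirected edges within `W`. -/
def orderedEdgesWithin {V : Type*} [Fintype V] [DecidableEq V] (G : SimpleGraph V)
    [DecidableRel G.Adj] (W : Finset V) : ℕ :=
  (Finset.univ.filter fun p : V × V => p.1 ∈ W ∧ p.2 ∈ W ∧ G.Adj p.1 p.2).card

section OrderedEdges

variable {V : Type*} [Fintype V] [DecidableEq V] (G : SimpleGraph V) [DecidableRel G.Adj]

lemma orderedEdgesWithin_eq_zero_of_isIndepSet {W : Finset V} (hW : IsIndepSet G ↑W) :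
    orderedEdgesWithin G W = 0 := by
  rw [orderedEdgesWithin, Finset.card_eq_zero, Finset.filter_eq_empty_iff]
  rintro ⟨i, j⟩ - ⟨hi, hj, hadj⟩
  exact hW hi hj hadj.ne hadj

lemma two_le_orderedEdgesWithin_of_not_isIndepSet {W : Finset V} (hW : ¬ IsIndepSet G ↑W) :
    2 ≤ orderedEdgesWithin G W := by
  simp only [IsIndepSet, Set.Pairwise, not_forall, not_not] at hW
  obtain ⟨i, hi : i ∈ W, j, hj : j ∈ W, hne, hadj⟩ := hW
  -- both orientations `(i, j)` and `(j, i)` of the edge are counted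
  refine Finset.one_lt_card_iff.mpr ⟨(i, j), (j, i), ?_, ?_, by simp [hne]⟩ <;>
    simp [hi, hj, hadj, hadj.symm]

end OrderedEdges

lemma card_compl_le_card_of_card_compl_le {V : Type*} [Fintype V] [DecidableEq V]
    {K S : Finset V} (h : Sᶜ.card ≤ K.card) : Kᶜ.card ≤ S.card := by
  rw [Finset.card_compl, ← Finset.card_compl_add_card S]
  omega

/-- If the retained set `Sᶜ` is independent, it is no larger than `K`, so `S` removes at least as
many nodes as `Kᶜ`; otherwise `Sᶜ` carries an edge, whose penalty `α₃ / 2` already exceeds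
`α₁ |V| / 2 ≥ L Kᶜ`. -/
theorem stmt_13_general {V : Type*} [Fintype V] [DecidableEq V] (G : SimpleGraph V)
    [DecidableRel G.Adj]
    (K : Finset V) (hK : IsIndepSet G ↑K)
    (hmax : ∀ K' : Finset V, IsIndepSet G ↑K' → K'.card ≤ K.card)
    (α₁ α₃ : ℝ) (h1 : 0 < α₁)
    (hα : 2 * α₁ * Fintype.card V < α₃)
    (L : Finset V → ℝ)
    (hL : ∀ S : Finset V,
      L S = α₁ / 2 * S.card + α₃ / 4 * orderedEdgesWithin G Sᶜ) :
    ∀ S : Finset V, L Kᶜ ≤ L S := by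
  intro S
  have hLK : L Kᶜ = α₁ / 2 * Kᶜ.card := by
    rw [hL, compl_compl, orderedEdgesWithin_eq_zero_of_isIndepSet G hK]
    simp
  have hKc : (Kᶜ.card : ℝ) ≤ Fintype.card V := by exact_mod_cast Finset.card_le_univ _
  have hα₃ : 0 ≤ α₃ := by nlinarith [Nat.cast_nonneg (α := ℝ) (Fintype.card V)]
  rw [hLK, hL S]
  by_cases hS : IsIndepSet G ↑Sᶜ
  · have hcard : (Kᶜ.card : ℝ) ≤ S.card :=
      mod_cast card_compl_le_card_of_card_compl_le (hmax _ hS)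
    nlinarith [mul_nonneg hα₃ (Nat.cast_nonneg (α := ℝ) (orderedEdgesWithin G Sᶜ))]
  · have hedges : (2 : ℝ) ≤ orderedEdgesWithin G Sᶜ :=
      mod_cast two_le_orderedEdgesWithin_of_not_isIndepSet G hS
    nlinarith [mul_le_mul_of_nonneg_left hedges hα₃, Nat.cast_nonneg (α := ℝ) S.card]

theorem stmt_13 {V : Type*} [Fintype V] [DecidableEq V] (G : SimpleGraph V)
    [DecidableRel G.Adj]
    (K : Finset V) (hK : IsIndepSet G ↑K)
    (hmax : ∀ K' : Finset V, IsIndepSet G ↑K' → K'.card ≤ K.card)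
    (α₁ α₃ : ℝ) (h1 : 0 < α₁) (h3 : 0 < α₃)
    (hα : 2 * α₁ * Fintype.card V < α₃)
    (L : Finset V → ℝ)
    (hL : ∀ S : Finset V,
      L S = α₁ / 2 * S.card + α₃ / 4 * orderedEdgesWithin G Sᶜ) :
    ∀ S : Finset V, L Kᶜ ≤ L S :=
  stmt_13_general G K hK hmax α₁ α₃ h1 hα L hL
end

section
/- Let G = (V,E) be a finite simple graph and α₁, α₃ > 0 with α₃ > 2α₁·|V|. Define L(K) = (α₁/2)(|V| - |K|) + (α₃/2)·e(K) over subsets K ⊆ V of retained nodes, where e(K) is the number of edges within K. If K minimizes L, then K is a maximum independent set of G. -/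
/-!
Deleting one endpoint of an edge inside `K` loses at least the two ordered pairs of that edge,
so it lowers `L` by at least `α₃ / 2 - α₁ / 2 > 0`; a minimizer therefore spans no edge.
On independent sets `L K = α₁ (|V| - |K|) / 2`, so a minimizer has maximum size.
-/

section

variable {V : Type*} [Fintype V] [DecidableEq V] (G : SimpleGraph V) [DecidableRel G.Adj]

noncomputable def misLoss (α₁ α₃ : ℝ) (K : Finset V) : ℝ :=
  α₁ / 2 * ((Fintype.card V : ℝ) - K.card) + α₃ / 4 * orderedEdgesWithin G K

lemma orderedEdgesWithin_erase_add_two_le {W : Finset V} {a b : V} (ha : a ∈ W) (hb : b ∈ W)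
    (hab : G.Adj a b) : orderedEdgesWithin G (W.erase a) + 2 ≤ orderedEdgesWithin G W := by
  set S := Finset.univ.filter fun p : V × V => p.1 ∈ W.erase a ∧ p.2 ∈ W.erase a ∧ G.Adj p.1 p.2
  have hsub : insert (a, b) (insert (b, a) S) ⊆
      Finset.univ.filter fun p : V × V => p.1 ∈ W ∧ p.2 ∈ W ∧ G.Adj p.1 p.2 := by
    intro p hp
    simp only [S, Finset.mem_insert, Finset.mem_filter, Finset.mem_univ, true_and] at hp ⊢
    rcases hp with rfl | rfl | ⟨hp₁, hp₂, hp⟩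
    · exact ⟨ha, hb, hab⟩
    · exact ⟨hb, ha, hab.symm⟩
    · exact ⟨Finset.mem_of_mem_erase hp₁, Finset.mem_of_mem_erase hp₂, hp⟩
  have hba : (b, a) ∉ S := by simp [S]
  have hab' : (a, b) ∉ insert (b, a) S := by simp [S, hab.ne]
  have := Finset.card_le_card hsub
  rw [Finset.card_insert_of_notMem hab', Finset.card_insert_of_notMem hba] at this
  exact this

variable {G}

lemma misLoss_erase_lt {α₁ α₃ : ℝ} (h3 : 0 ≤ α₃) (hα : α₁ < α₃) {K : Finset V} {a b : V}
    (ha : a ∈ K) (hb : b ∈ K) (hab : G.Adj a b) :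
    misLoss G α₁ α₃ (K.erase a) < misLoss G α₁ α₃ K := by
  have hedges : (orderedEdgesWithin G (K.erase a) : ℝ) + 2 ≤ orderedEdgesWithin G K := by
    exact_mod_cast orderedEdgesWithin_erase_add_two_le G ha hb hab
  have hcard : ((K.erase a).card : ℝ) + 1 = K.card := by
    exact_mod_cast Finset.card_erase_add_one ha
  rw [misLoss, misLoss, ← hcard]
  nlinarith [mul_le_mul_of_nonneg_left hedges (by positivity : (0 : ℝ) ≤ α₃ / 4)]

lemma isIndepSet_of_isMinOn_misLoss {α₁ α₃ : ℝ} (h3 : 0 ≤ α₃) (hα : α₁ < α₃) {K : Finset V}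
    (hmin : ∀ K', misLoss G α₁ α₃ K ≤ misLoss G α₁ α₃ K') : IsIndepSet G ↑K :=
  fun _ ha _ hb _ hab => (misLoss_erase_lt h3 hα ha hb hab).not_ge (hmin _)

lemma card_le_of_misLoss_le {α₁ α₃ : ℝ} (h1 : 0 < α₁) {K K' : Finset V} (hK : IsIndepSet G ↑K)
    (hK' : IsIndepSet G ↑K') (hle : misLoss G α₁ α₃ K ≤ misLoss G α₁ α₃ K') :
    K'.card ≤ K.card := by
  rw [misLoss, misLoss, orderedEdgesWithin_eq_zero_of_isIndepSet G hK,
    orderedEdgesWithin_eq_zero_of_isIndepSet G hK'] at hle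
  have : (K'.card : ℝ) ≤ K.card := by nlinarith
  exact_mod_cast this

end

theorem stmt_14 {V : Type*} [Fintype V] [DecidableEq V] (G : SimpleGraph V)
    [DecidableRel G.Adj]
    (α₁ α₃ : ℝ) (h1 : 0 < α₁) (h3 : 0 < α₃)
    (hα : 2 * α₁ * Fintype.card V < α₃)
    (L : Finset V → ℝ)
    (hL : ∀ K : Finset V,
      L K = α₁ / 2 * ((Fintype.card V : ℝ) - K.card) + α₃ / 4 * orderedEdgesWithin G K)
    (K : Finset V) (hmin : ∀ K' : Finset V, L K ≤ L K') :
    IsIndepSet G ↑K ∧ ∀ K' : Finset V, IsIndepSet G ↑K' → K'.card ≤ K.card := by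
  obtain rfl : L = misLoss G α₁ α₃ := funext hL
  have hK : IsIndepSet G ↑K := by
    rcases isEmpty_or_nonempty V with hV | hV
    · exact fun a => isEmptyElim a
    have hcard : (1 : ℝ) ≤ Fintype.card V := by exact_mod_cast Fintype.card_pos
    exact isIndepSet_of_isMinOn_misLoss h3.le (by nlinarith) hmin
  exact ⟨hK, fun K' hK' => card_le_of_misLoss_le h1 hK hK' (hmin K')⟩
end
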